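/- Let 0 < α < 1. There exist a constant η > 0 and a bounded continuous function f : [0,∞) → [0,∞) such that the function u(t) := ∫_0^t f(z) (t − z)^{α−1} dz satisfies: u(0) = 0, 0 ≤ u(t) ≤ π/sin(πα) for all t ≥ 0, and limsup_{t→∞} u(t) − liminf_{t→∞} u(t) ≥ η; in particular u is bounded but has no limit as t → ∞. -/

import Mathlib

/-!
Take `f = θ · max z 1 ^ (-α)` with `θ = α (1 - α) π / sin (π α)`, switched on by a cutoff only on
sparse plateaus `(c_n, 2 c_n)`. Since `f z ≤ θ z ^ (-α)`, splitting the fractional integral at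
`t / 2` bounds `u` by `θ / (1 - α) + θ / α = π / sin (π α)`. Near the end of a plateau the kernel
mass over it is of order `c_n ^ α`, balancing `f ≈ c_n ^ (-α)`, so `u (2 c_n - 1) ≥ θ / 4`. The next
plateau starts after a gap `D_n` with `D_n ^ (1 - α) = 16 c_n`, across which the kernel decays
enough that `u c_{n+1} ≤ θ / 8`.
-/

open MeasureTheory Filter Set Real

noncomputable def fracIntegral (α : ℝ) (f : ℝ → ℝ) (t : ℝ) : ℝ :=
  ∫ z in (0:ℝ)..t, f z * (t - z) ^ (α - 1)

section Kernel

variable {α : ℝ}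

lemma intervalIntegrable_sub_rpow (hα : 0 < α) (t a b : ℝ) :
    IntervalIntegrable (fun z => (t - z) ^ (α - 1)) volume a b := by
  simpa using (intervalIntegral.intervalIntegrable_rpow' (a := t - a) (b := t - b)
    (r := α - 1) (by linarith)).comp_sub_left t

lemma integral_sub_rpow (hα : 0 < α) (t a b : ℝ) :
    ∫ z in a..b, (t - z) ^ (α - 1) = ((t - a) ^ α - (t - b) ^ α) / α := by
  rw [intervalIntegral.integral_comp_sub_left (fun x => x ^ (α - 1)) t,
    integral_rpow (Or.inl (by linarith))]
  norm_num

lemma Continuous.intervalIntegrable_mul_sub_rpow {f : ℝ → ℝ} (hf : Continuous f) (hα : 0 < α)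
    (t a b : ℝ) : IntervalIntegrable (fun z => f z * (t - z) ^ (α - 1)) volume a b :=
  (intervalIntegrable_sub_rpow hα t a b).continuousOn_mul hf.continuousOn

end Kernel

section FracIntegral

variable {α : ℝ} {f : ℝ → ℝ} {t : ℝ}

lemma fracIntegral_nonneg (ht : 0 ≤ t) (hf : ∀ z ∈ Icc 0 t, 0 ≤ f z) :
    0 ≤ fracIntegral α f t :=
  intervalIntegral.integral_nonneg ht fun z hz =>
    mul_nonneg (hf z hz) (rpow_nonneg (sub_nonneg.2 hz.2) _)

lemma fracIntegral_le_of_le_rpow_neg (hα0 : 0 < α) (hα1 : α < 1) (hf : Continuous f) {C : ℝ}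
    (hC : 0 ≤ C) (hfC : ∀ z, 0 < z → f z ≤ C * z ^ (-α)) (ht : 0 ≤ t) :
    fracIntegral α f t ≤ C / (α * (1 - α)) := by
  rcases ht.eq_or_lt with rfl | ht
  · rw [fracIntegral, intervalIntegral.integral_same]
    exact div_nonneg hC (mul_nonneg hα0.le (by linarith))
  have hs : 0 < t / 2 := by positivity
  have hleft : ∫ z in (0:ℝ)..t / 2, f z * (t - z) ^ (α - 1) ≤ C / (1 - α) := calc
    _ ≤ ∫ z in (0:ℝ)..t / 2, C * z ^ (-α) * (t / 2) ^ (α - 1) := by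
      refine intervalIntegral.integral_mono_on_of_le_Ioo hs.le
        (hf.intervalIntegrable_mul_sub_rpow hα0 _ _ _)
        (((intervalIntegral.intervalIntegrable_rpow' (by linarith)).const_mul C).mul_const _)
        fun z hz => mul_le_mul (hfC z hz.1) ?_ (rpow_nonneg (by linarith [hz.2]) _)
          (mul_nonneg hC (rpow_nonneg hz.1.le _))
      exact rpow_le_rpow_of_nonpos hs (by linarith [hz.2]) (by linarith)
    _ = C / (1 - α) := by
      rw [intervalIntegral.integral_mul_const, intervalIntegral.integral_const_mul,
        integral_rpow (Or.inl (by linarith)), zero_rpow (by linarith), sub_zero,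
        neg_add_eq_sub, mul_div_assoc', div_mul_eq_mul_div, mul_assoc, ← rpow_add hs]
      norm_num
  have hright : ∫ z in t / 2..t, f z * (t - z) ^ (α - 1) ≤ C / α := calc
    _ ≤ ∫ z in t / 2..t, C * (t / 2) ^ (-α) * (t - z) ^ (α - 1) := by
      refine intervalIntegral.integral_mono_on (by linarith)
        (hf.intervalIntegrable_mul_sub_rpow hα0 _ _ _)
        ((intervalIntegrable_sub_rpow hα0 _ _ _).const_mul _)
        fun z hz => mul_le_mul_of_nonneg_right ((hfC z (hs.trans_le hz.1)).trans ?_)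
          (rpow_nonneg (sub_nonneg.2 hz.2) _)
      exact mul_le_mul_of_nonneg_left
        (rpow_le_rpow_of_nonpos hs hz.1 (by linarith)) hC
    _ = C / α := by
      rw [intervalIntegral.integral_const_mul, integral_sub_rpow hα0, sub_self,
        zero_rpow hα0.ne', sub_zero, sub_half, mul_div_assoc', mul_assoc, ← rpow_add hs]
      norm_num
  rw [fracIntegral, ← intervalIntegral.integral_add_adjacent_intervals
    (hf.intervalIntegrable_mul_sub_rpow hα0 _ _ _) (hf.intervalIntegrable_mul_sub_rpow hα0 _ _ _)]
  calc _ ≤ C / (1 - α) + C / α := add_le_add hleft hright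
    _ = C / (α * (1 - α)) := by
      field_simp [(by linarith : 1 - α ≠ 0)]
      ring

lemma le_fracIntegral_of_le_on (hα : 0 < α) (hf : Continuous f) (hf0 : ∀ z ∈ Icc 0 t, 0 ≤ f z)
    {a b m : ℝ} (ha : 0 ≤ a) (hab : a ≤ b) (hbt : b ≤ t) (hm : ∀ z ∈ Icc a b, m ≤ f z) :
    m * ((t - a) ^ α - (t - b) ^ α) / α ≤ fracIntegral α f t := calc
  _ = ∫ z in a..b, m * (t - z) ^ (α - 1) := by
    rw [intervalIntegral.integral_const_mul, integral_sub_rpow hα, mul_div_assoc]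
  _ ≤ ∫ z in a..b, f z * (t - z) ^ (α - 1) :=
    intervalIntegral.integral_mono_on hab ((intervalIntegrable_sub_rpow hα _ _ _).const_mul _)
      (hf.intervalIntegrable_mul_sub_rpow hα _ _ _) fun z hz =>
        mul_le_mul_of_nonneg_right (hm z hz) (rpow_nonneg (by linarith [hz.2]) _)
  _ ≤ fracIntegral α f t := by
    refine intervalIntegral.integral_mono_interval ha hab hbt
      (ae_restrict_of_forall_mem measurableSet_Ioc fun z hz => ?_)
      (hf.intervalIntegrable_mul_sub_rpow hα _ _ _)
    exact mul_nonneg (hf0 z (Ioc_subset_Icc_self hz)) (rpow_nonneg (sub_nonneg.2 hz.2) _)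

lemma fracIntegral_le_of_eq_zero_on (hα0 : 0 < α) (hα1 : α ≤ 1) (hf : Continuous f)
    {s M : ℝ} (hs : 0 ≤ s) (hst : s < t) (hM0 : 0 ≤ M) (hM : ∀ z ∈ Icc 0 s, f z ≤ M)
    (hzero : ∀ z ∈ Icc s t, f z = 0) :
    fracIntegral α f t ≤ M * s * (t - s) ^ (α - 1) := by
  have hgap : ∫ z in s..t, f z * (t - z) ^ (α - 1) = 0 := by
    rw [← intervalIntegral.integral_zero (a := s) (b := t) (μ := volume)]
    refine intervalIntegral.integral_congr fun z hz => ?_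
    rw [uIcc_of_le hst.le] at hz
    simp only [hzero z hz, zero_mul]
  calc fracIntegral α f t
      = ∫ z in (0:ℝ)..s, f z * (t - z) ^ (α - 1) := by
        rw [fracIntegral, ← intervalIntegral.integral_add_adjacent_intervals
          (hf.intervalIntegrable_mul_sub_rpow hα0 _ _ s)
          (hf.intervalIntegrable_mul_sub_rpow hα0 _ _ _), hgap, add_zero]
    _ ≤ ∫ z in (0:ℝ)..s, M * (t - s) ^ (α - 1) :=
      intervalIntegral.integral_mono_on hs (hf.intervalIntegrable_mul_sub_rpow hα0 _ _ _)
        intervalIntegrable_const fun z hz =>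
          mul_le_mul (hM z hz) (rpow_le_rpow_of_nonpos (by linarith) (by linarith [hz.2])
            (by linarith)) (rpow_nonneg (by linarith [hz.2]) _) hM0
    _ = M * s * (t - s) ^ (α - 1) := by
      rw [intervalIntegral.integral_const, smul_eq_mul, sub_zero]
      ring

end FracIntegral

lemma sub_le_limsup_sub_liminf {ι : Type*} {l : Filter ι} {u : ι → ℝ} {a b m M : ℝ}
    (hm : ∀ᶠ x in l, m ≤ u x) (hM : ∀ᶠ x in l, u x ≤ M)
    (ha : ∃ᶠ x in l, a ≤ u x) (hb : ∃ᶠ x in l, u x ≤ b) :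
    a - b ≤ limsup u l - liminf u l :=
  sub_le_sub (le_limsup_of_frequently_le ha (isBoundedUnder_of_eventually_le hM))
    (liminf_le_of_frequently_le hb (isBoundedUnder_of_eventually_ge hm))

namespace FracOscillation

noncomputable def plateauStart (α : ℝ) : ℕ → ℝ
  | 0 => 4
  | n + 1 => 2 * plateauStart α n + (16 * plateauStart α n) ^ (1 / (1 - α))

def plateaus (α : ℝ) : Set ℝ := ⋃ n, Ioo (plateauStart α n) (2 * plateauStart α n)

noncomputable def plateauBump (α : ℝ) (z : ℝ) : ℝ := min 1 (Metric.infDist z (plateaus α)ᶜ)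

noncomputable def amplitude (α : ℝ) : ℝ := α * (1 - α) * (π / sin (π * α))

noncomputable def source (α : ℝ) (z : ℝ) : ℝ :=
  amplitude α * max z 1 ^ (-α) * plateauBump α z

variable {α : ℝ}

lemma four_le_plateauStart (n : ℕ) : 4 ≤ plateauStart α n := by
  induction n with
  | zero => exact le_rfl
  | succ n ih =>
    have := rpow_nonneg (by linarith : (0:ℝ) ≤ 16 * plateauStart α n) (1 / (1 - α))
    rw [plateauStart]
    linarith

lemma two_mul_plateauStart_le_succ (n : ℕ) : 2 * plateauStart α n ≤ plateauStart α (n + 1) :=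
  le_add_of_nonneg_right (rpow_nonneg (by linarith [four_le_plateauStart (α := α) n]) _)

lemma plateauStart_mono : Monotone (plateauStart α) :=
  monotone_nat_of_le_succ fun n => by
    linarith [two_mul_plateauStart_le_succ (α := α) n, four_le_plateauStart (α := α) n]

lemma tendsto_plateauStart : Tendsto (plateauStart α) atTop atTop := by
  refine tendsto_atTop_mono (fun n => ?_) tendsto_natCast_atTop_atTop
  induction n with
  | zero => simpa using (four_le_plateauStart 0).trans' (by norm_num)
  | succ n ih =>
    push_cast
    linarith [two_mul_plateauStart_le_succ (α := α) n, four_le_plateauStart (α := α) n]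

lemma not_mem_plateaus {n : ℕ} {z : ℝ} (h₁ : 2 * plateauStart α n ≤ z)
    (h₂ : z ≤ plateauStart α (n + 1)) : z ∉ plateaus α := by
  simp only [plateaus, mem_iUnion, mem_Ioo, not_exists, not_and_or, not_lt]
  intro k
  rcases le_or_gt k n with hk | hk
  · exact .inr ((mul_le_mul_of_nonneg_left (plateauStart_mono hk) zero_le_two).trans h₁)
  · exact .inl (h₂.trans (plateauStart_mono hk))

lemma zero_not_mem_plateaus : (0:ℝ) ∉ plateaus α := by
  simp only [plateaus, mem_iUnion, mem_Ioo, not_exists, not_and_or, not_lt]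
  exact fun k => .inl (by linarith [four_le_plateauStart (α := α) k])

lemma continuous_plateauBump : Continuous (plateauBump α) :=
  continuous_const.min (Metric.continuous_infDist_pt _)

lemma plateauBump_nonneg (z : ℝ) : 0 ≤ plateauBump α z :=
  le_min zero_le_one Metric.infDist_nonneg

lemma plateauBump_le_one (z : ℝ) : plateauBump α z ≤ 1 := min_le_left _ _

lemma plateauBump_eq_zero {z : ℝ} (hz : z ∉ plateaus α) : plateauBump α z = 0 := by
  rw [plateauBump, Metric.infDist_zero_of_mem hz, min_eq_right zero_le_one]

lemma plateauBump_eq_one {n : ℕ} {z : ℝ}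
    (hz : z ∈ Icc (plateauStart α n + 1) (2 * plateauStart α n - 1)) : plateauBump α z = 1 := by
  refine min_eq_left ((Metric.le_infDist ⟨0, zero_not_mem_plateaus⟩).2 fun y hy => ?_)
  by_contra! hzy
  rw [Real.dist_eq, abs_lt] at hzy
  exact hy (mem_iUnion.2 ⟨n, by constructor <;> linarith [hz.1, hz.2]⟩)

lemma amplitude_pos (hα0 : 0 < α) (hα1 : α < 1) : 0 < amplitude α :=
  mul_pos (mul_pos hα0 (by linarith)) (div_pos pi_pos
    (sin_pos_of_pos_of_lt_pi (by positivity) (by nlinarith [pi_pos])))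

lemma continuous_source : Continuous (source α) :=
  (continuous_const.mul ((continuous_id.max continuous_const).rpow_const
    fun _ => .inl (by positivity))).mul continuous_plateauBump

lemma source_eq_zero {z : ℝ} (hz : z ∉ plateaus α) : source α z = 0 := by
  rw [source, plateauBump_eq_zero hz, mul_zero]

variable (hα0 : 0 < α) (hα1 : α < 1)
include hα0 hα1

lemma source_nonneg (z : ℝ) : 0 ≤ source α z :=
  mul_nonneg (mul_nonneg (amplitude_pos hα0 hα1).le (rpow_nonneg (by positivity) _))
    (plateauBump_nonneg z)

lemma source_le_amplitude_mul_rpow_neg {z : ℝ} (hz : 0 < z) :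
    source α z ≤ amplitude α * z ^ (-α) :=
  calc source α z ≤ amplitude α * max z 1 ^ (-α) * 1 :=
        mul_le_mul_of_nonneg_left (plateauBump_le_one z)
          (mul_nonneg (amplitude_pos hα0 hα1).le (rpow_nonneg (by positivity) _))
    _ ≤ amplitude α * z ^ (-α) := by
        rw [mul_one]
        exact mul_le_mul_of_nonneg_left (rpow_le_rpow_of_nonpos hz (le_max_left z 1)
          (by linarith)) (amplitude_pos hα0 hα1).le

lemma source_le_amplitude (z : ℝ) : source α z ≤ amplitude α :=
  calc source α z ≤ amplitude α * 1 * 1 :=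
        mul_le_mul (mul_le_mul_of_nonneg_left (rpow_le_one_of_one_le_of_nonpos
          (le_max_right z 1) (by linarith)) (amplitude_pos hα0 hα1).le)
          (plateauBump_le_one z) (plateauBump_nonneg z) (by linarith [amplitude_pos hα0 hα1])
    _ = amplitude α := by ring

lemma amplitude_mul_rpow_neg_le_source {n : ℕ} {z : ℝ}
    (hz : z ∈ Icc (plateauStart α n + 1) (2 * plateauStart α n - 1)) :
    amplitude α * (2 * plateauStart α n) ^ (-α) ≤ source α z := by
  have hz1 : 1 ≤ z := by linarith [hz.1, four_le_plateauStart (α := α) n]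
  rw [source, plateauBump_eq_one hz, max_eq_left hz1, mul_one]
  exact mul_le_mul_of_nonneg_left (rpow_le_rpow_of_nonpos (by linarith)
    (by linarith [hz.2]) (by linarith)) (amplitude_pos hα0 hα1).le

lemma fracIntegral_source_le {t : ℝ} (ht : 0 ≤ t) :
    fracIntegral α (source α) t ≤ π / sin (π * α) := by
  refine (fracIntegral_le_of_le_rpow_neg hα0 hα1 continuous_source
    (amplitude_pos hα0 hα1).le (fun z hz => source_le_amplitude_mul_rpow_neg hα0 hα1 hz)
    ht).trans_eq ?_
  rw [amplitude, mul_div_cancel_left₀ _ (mul_pos hα0 (by linarith)).ne']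

lemma amplitude_div_four_le_fracIntegral_source (n : ℕ) :
    amplitude α / 4 ≤ fracIntegral α (source α) (2 * plateauStart α n - 1) := by
  set c := plateauStart α n
  have hc : 4 ≤ c := four_le_plateauStart n
  have hθ := amplitude_pos hα0 hα1
  have hratio : 1 / 4 ≤ (2 * c) ^ (-α) * (c - 2) ^ α := calc
    (1 / 4 : ℝ) ≤ (1 / 4) ^ α := self_le_rpow_of_le_one (by norm_num) (by norm_num) hα1.le
    _ ≤ ((c - 2) / (2 * c)) ^ α :=
      rpow_le_rpow (by norm_num) (by rw [le_div_iff₀ (by linarith)]; linarith) hα0.le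
    _ = (2 * c) ^ (-α) * (c - 2) ^ α := by
      rw [div_rpow (by linarith) (by linarith), rpow_neg (by linarith), div_eq_inv_mul]
  calc amplitude α / 4 ≤ amplitude α * ((2 * c) ^ (-α) * (c - 2) ^ α) := by
        rw [div_eq_mul_one_div]
        exact mul_le_mul_of_nonneg_left hratio hθ.le
    _ ≤ amplitude α * ((2 * c) ^ (-α) * (c - 2) ^ α) / α :=
        le_div_self (mul_nonneg hθ.le (by linarith)) hα0 hα1.le
    _ = amplitude α * (2 * c) ^ (-α) * ((2 * c - 1 - (c + 1)) ^ α - (2 * c - 1 - (2 * c - 1)) ^ α) / α := by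
        rw [sub_self, zero_rpow hα0.ne', sub_zero]
        ring_nf
    _ ≤ fracIntegral α (source α) (2 * c - 1) :=
        le_fracIntegral_of_le_on hα0 continuous_source (fun z _ => source_nonneg hα0 hα1 z)
          (by linarith) (by linarith) le_rfl
          (fun z hz => amplitude_mul_rpow_neg_le_source hα0 hα1 hz)

lemma fracIntegral_source_le_amplitude_div_eight (n : ℕ) :
    fracIntegral α (source α) (plateauStart α (n + 1)) ≤ amplitude α / 8 := by
  set c := plateauStart α n
  have hc : 4 ≤ c := four_le_plateauStart n
  have hgap : plateauStart α (n + 1) - 2 * c = (16 * c) ^ (1 / (1 - α)) := by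
    rw [plateauStart]
    ring
  have hgap_pos : 0 < (16 * c) ^ (1 / (1 - α)) := rpow_pos_of_pos (by linarith) _
  calc fracIntegral α (source α) (plateauStart α (n + 1))
      ≤ amplitude α * (2 * c) * (plateauStart α (n + 1) - 2 * c) ^ (α - 1) :=
        fracIntegral_le_of_eq_zero_on hα0 hα1.le continuous_source (by linarith)
          (by linarith) (amplitude_pos hα0 hα1).le (fun z _ => source_le_amplitude hα0 hα1 z)
          fun z hz => source_eq_zero (not_mem_plateaus hz.1 hz.2)
    _ = amplitude α / 8 := by
      rw [hgap, ← rpow_mul (by linarith), one_div_mul_eq_div,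
        show (α - 1) / (1 - α) = -1 by rw [div_eq_iff (by linarith)]; ring, rpow_neg_one]
      field_simp
      ring

end FracOscillation

open FracOscillation in
/-- For `0 < α < 1` there exist `η > 0` and a bounded continuous nonnegative
function `f` on `[0,∞)` whose fractional integral `u t = ∫_0^t f z (t-z)^(α-1) dz`
satisfies `u 0 = 0`, `0 ≤ u t ≤ π / sin (π α)` for all `t ≥ 0`, and
`limsup u - liminf u ≥ η` at infinity; in particular `u` is bounded but has no limit. -/
theorem stmt_1 (α : ℝ) (hα0 : 0 < α) (hα1 : α < 1) :
    ∃ (η : ℝ) (f : ℝ → ℝ), 0 < η ∧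
      (∃ M : ℝ, ∀ t, 0 ≤ t → |f t| ≤ M) ∧
      ContinuousOn f (Set.Ici 0) ∧
      (∀ t, 0 ≤ t → 0 ≤ f t) ∧
      (∫ z in (0:ℝ)..(0:ℝ), f z * ((0:ℝ) - z) ^ (α - 1)) = 0 ∧
      (∀ t, 0 ≤ t →
        0 ≤ (∫ z in (0:ℝ)..t, f z * (t - z) ^ (α - 1)) ∧
        (∫ z in (0:ℝ)..t, f z * (t - z) ^ (α - 1)) ≤ Real.pi / Real.sin (Real.pi * α)) ∧
      η ≤ limsup (fun t => ∫ z in (0:ℝ)..t, f z * (t - z) ^ (α - 1)) atTop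
            - liminf (fun t => ∫ z in (0:ℝ)..t, f z * (t - z) ^ (α - 1)) atTop := by
  have hθ := amplitude_pos hα0 hα1
  have hbounds (t : ℝ) (ht : 0 ≤ t) : 0 ≤ fracIntegral α (source α) t ∧
      fracIntegral α (source α) t ≤ π / sin (π * α) :=
    ⟨fracIntegral_nonneg ht fun z _ => source_nonneg hα0 hα1 z,
      fracIntegral_source_le hα0 hα1 ht⟩
  refine ⟨amplitude α / 8, source α, by positivity,
    ⟨amplitude α, fun t _ => abs_le.2 ⟨by linarith [source_nonneg hα0 hα1 t],
      source_le_amplitude hα0 hα1 t⟩⟩,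
    continuous_source.continuousOn, fun t _ => source_nonneg hα0 hα1 t,
    intervalIntegral.integral_same, hbounds, ?_⟩
  have hhigh : ∃ᶠ t in atTop, amplitude α / 4 ≤ fracIntegral α (source α) t :=
    (tendsto_atTop_mono (fun n => by linarith [four_le_plateauStart (α := α) n])
      tendsto_plateauStart).frequently
      (.of_forall (amplitude_div_four_le_fracIntegral_source hα0 hα1))
  have hlow : ∃ᶠ t in atTop, fracIntegral α (source α) t ≤ amplitude α / 8 :=
    ((tendsto_add_atTop_iff_nat 1).2 tendsto_plateauStart).frequently
      (.of_forall (fracIntegral_source_le_amplitude_div_eight hα0 hα1))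
  calc amplitude α / 8 = amplitude α / 4 - amplitude α / 8 := by ring
    _ ≤ _ := sub_le_limsup_sub_liminf
      ((eventually_ge_atTop 0).mono fun t ht => (hbounds t ht).1)
      ((eventually_ge_atTop 0).mono fun t ht => (hbounds t ht).2) hhigh hlow
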